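/- arXiv:1403.0388 — 2 statements merged into one kernel-verified Lean document; each statement's English description precedes it below -/
import Mathlib

section
/- Let β ∈ (0,1) be a real number, n ≥ 1 and N natural numbers, x : Fin n → Fin N → Bool the experts' predictions, and c : Fin N → Bool the correct labels. For an expert i and a time t ≤ N, let mist i t denote the number of trials j < t with x i j ≠ c j, let w i t = β^(mist i t), let W t = ∑_{i} w i t, and let F t = (∑_{i : x i t ≠ c t} w i t) / W t. Then for every expert k, n * ∏_{t < N} (1 - (1-β) * F t) ≥ β^(mist k N). -/
/-- Number of mistakes expert `i` made during the first `t` trials. -/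
def mist {n N : ℕ} (x : Fin n → Fin N → Bool) (c : Fin N → Bool)
    (i : Fin n) (t : ℕ) : ℕ :=
  (Finset.univ.filter (fun j : Fin N => (j : ℕ) < t ∧ x i j ≠ c j)).card

/-- Weight of expert `i` just before trial `t`. -/
noncomputable def w (β : ℝ) {n N : ℕ} (x : Fin n → Fin N → Bool) (c : Fin N → Bool)
    (i : Fin n) (t : ℕ) : ℝ :=
  β ^ (mist x c i t)

/-- Total weight just before trial `t`. -/
noncomputable def W (β : ℝ) {n N : ℕ} (x : Fin n → Fin N → Bool) (c : Fin N → Bool)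
    (t : ℕ) : ℝ :=
  ∑ i : Fin n, w β x c i t

/-- Fraction of the total weight placed on the wrong answer at trial `t`. -/
noncomputable def F (β : ℝ) {n N : ℕ} (x : Fin n → Fin N → Bool) (c : Fin N → Bool)
    (t : Fin N) : ℝ :=
  (∑ i ∈ Finset.univ.filter (fun i : Fin n => x i t ≠ c t), w β x c i (t : ℕ)) /
    W β x c (t : ℕ)


/-!
Each trial multiplies the weights of the experts that erred by `β` and leaves the others
unchanged, so it multiplies the total weight `W` by exactly `1 - (1 - β) * F t`. Hence
`n * ∏ t, (1 - (1 - β) * F t)` telescopes to the final total weight `W N`, which dominates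
the final weight `β ^ mist k N` of any single expert since all weights are positive.
-/

theorem mul_prod_eq_of_forall_succ_eq_mul {M : Type*} [CommMonoid M] :
    ∀ {N : ℕ} (a : ℕ → M) (r : Fin N → M), (∀ t : Fin N, a (t + 1) = a t * r t) →
      a N = a 0 * ∏ t, r t
  | 0, _, _, _ => by simp
  | N + 1, a, r, h => by
    rw [Fin.prod_univ_castSucc, ← mul_assoc,
      ← mul_prod_eq_of_forall_succ_eq_mul a (fun t => r t.castSucc) (fun t => h t.castSucc)]
    exact h (Fin.last N)

theorem Finset.sum_ite_mul_eq_mul_one_sub_mul_div {ι K : Type*} [Field K] (s : Finset ι)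
    (p : ι → Prop) [DecidablePred p] (β : K) (v : ι → K) (hv : ∑ i ∈ s, v i ≠ 0) :
    ∑ i ∈ s, (if p i then β else 1) * v i =
      (∑ i ∈ s, v i) * (1 - (1 - β) * ((∑ i ∈ s with p i, v i) / ∑ i ∈ s, v i)) := by
  rw [mul_sub, mul_one, mul_left_comm, mul_div_cancel₀ _ hv, Finset.sum_filter,
    Finset.mul_sum, ← Finset.sum_sub_distrib]
  refine Finset.sum_congr rfl fun i _ => ?_
  split_ifs <;> ring

section Weights

variable {n N : ℕ} (x : Fin n → Fin N → Bool) (c : Fin N → Bool)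

theorem mist_zero (i : Fin n) : mist x c i 0 = 0 := by
  simp [mist]

theorem mist_succ (i : Fin n) (t : Fin N) :
    mist x c i (t + 1) = mist x c i t + if x i t ≠ c t then 1 else 0 := by
  have hsplit : Finset.univ.filter (fun j : Fin N => (j : ℕ) < t + 1 ∧ x i j ≠ c j) =
      Finset.univ.filter (fun j : Fin N => (j : ℕ) < t ∧ x i j ≠ c j) ∪
        Finset.univ.filter (fun j => j = t ∧ x i j ≠ c j) := by
    ext j
    simp only [Finset.mem_filter, Finset.mem_union, Finset.mem_univ, true_and,
      Nat.lt_succ_iff_lt_or_eq, or_and_right, Fin.val_inj]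
  have hdisj : Disjoint (Finset.univ.filter (fun j : Fin N => (j : ℕ) < t ∧ x i j ≠ c j))
      (Finset.univ.filter (fun j => j = t ∧ x i j ≠ c j)) :=
    Finset.disjoint_filter.mpr fun j _ hj ht => by simp [ht.1] at hj
  rw [mist, hsplit, Finset.card_union_of_disjoint hdisj, mist]
  simp [Finset.card_filter, ite_and]

theorem W_pos [Nonempty (Fin n)] {β : ℝ} (hβ : 0 < β) (t : ℕ) : 0 < W β x c t :=
  Finset.sum_pos (fun _ _ => pow_pos hβ _) Finset.univ_nonempty

theorem w_le_W {β : ℝ} (hβ : 0 ≤ β) (k : Fin n) (t : ℕ) : w β x c k t ≤ W β x c t :=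
  Finset.single_le_sum (fun i _ => pow_nonneg hβ (mist x c i t)) (Finset.mem_univ k)

variable (β : ℝ)

theorem W_zero : W β x c 0 = n := by
  simp [W, w, mist_zero]

theorem w_succ (i : Fin n) (t : Fin N) :
    w β x c i (t + 1) = (if x i t ≠ c t then β else 1) * w β x c i t := by
  rw [w, w, mist_succ, pow_add]
  split_ifs <;> simp [mul_comm]

theorem W_succ (t : Fin N) (ht : W β x c t ≠ 0) :
    W β x c (t + 1) = W β x c t * (1 - (1 - β) * F β x c t) := by
  simp only [W, w_succ]
  exact Finset.sum_ite_mul_eq_mul_one_sub_mul_div _ _ _ _ ht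

end Weights

theorem rwm_weight_lower_bound_general
    (β : ℝ) (hβ0 : 0 < β)
    (n N : ℕ)
    (x : Fin n → Fin N → Bool) (c : Fin N → Bool)
    (k : Fin n) :
    (n : ℝ) * ∏ t : Fin N, (1 - (1 - β) * F β x c t) ≥ β ^ (mist x c k N) := by
  have : Nonempty (Fin n) := ⟨k⟩
  have telescope := mul_prod_eq_of_forall_succ_eq_mul (W β x c) _
    fun t => W_succ x c β t (W_pos x c hβ0 t).ne'
  calc (n : ℝ) * ∏ t : Fin N, (1 - (1 - β) * F β x c t) = W β x c N := by
        rw [← W_zero x c β, telescope]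
    _ ≥ β ^ mist x c k N := w_le_W x c hβ0.le k N

theorem rwm_weight_lower_bound
    (β : ℝ) (hβ0 : 0 < β) (hβ1 : β < 1)
    (n N : ℕ) (hn : 1 ≤ n)
    (x : Fin n → Fin N → Bool) (c : Fin N → Bool)
    (k : Fin n) :
    (n : ℝ) * ∏ t : Fin N, (1 - (1 - β) * F β x c t) ≥ β ^ (mist x c k N) :=
  rwm_weight_lower_bound_general β hβ0 n N x c k
end

section
/- Let β ∈ (0,1) be a real number, n ≥ 1 and L ≥ 1 natural numbers, and for each j ∈ Fin (L+1) let t_j be a natural number and F_j : Fin t_j → ℝ satisfy 0 ≤ F_j i ≤ 1 for all i. Let m : Fin (L+1) → ℕ be such that for each j, n * ∏_{i} (1 - (1-β) * F_j i) ≥ β^(m j). Then ∑_{j} ∑_{i} F_j i ≤ ((∑_{j} m j) * ln(1/β) + (L+1) * ln n) / (1 - β). -/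
/-!
Each learner runs randomized weighted majority on its own trials. The total weight of its
experts starts at `n`, is multiplied at trial `i` by `1 - (1 - β) F i`, and never drops below
the weight `β ^ m` of its best expert. Since `1 - x ≤ exp (-x)`, taking logarithms gives
`(1 - β) ∑ᵢ F i ≤ m log (1 / β) + log n` for every learner; summing over the `L + 1` learners
gives the bound.
-/

open Real Finset

theorem prod_one_sub_le_exp_neg_sum {ι : Type*} (s : Finset ι) (x : ι → ℝ)
    (hx : ∀ i ∈ s, x i ≤ 1) : ∏ i ∈ s, (1 - x i) ≤ exp (-∑ i ∈ s, x i) := by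
  rw [← sum_neg_distrib, exp_sum]
  exact prod_le_prod (fun i hi => sub_nonneg.2 (hx i hi)) fun i _ => one_sub_le_exp_neg (x i)

theorem one_sub_mul_sum_le_of_pow_le_mul_prod {ι : Type*} (s : Finset ι) {β n : ℝ} {m : ℕ}
    (hβ0 : 0 < β) (hβ1 : β ≤ 1) (hn : 0 ≤ n) (F : ι → ℝ) (hF : ∀ i ∈ s, F i ≤ 1)
    (h : β ^ m ≤ n * ∏ i ∈ s, (1 - (1 - β) * F i)) :
    (1 - β) * ∑ i ∈ s, F i ≤ m * log (1 / β) + log n := by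
  have hstep : ∀ i ∈ s, (1 - β) * F i ≤ 1 := fun i hi =>
    (mul_le_of_le_one_right (sub_nonneg.2 hβ1) (hF i hi)).trans (by linarith)
  have hweight : β ^ m ≤ n * exp (-((1 - β) * ∑ i ∈ s, F i)) := by
    rw [mul_sum]
    exact h.trans (mul_le_mul_of_nonneg_left (prod_one_sub_le_exp_neg_sum s _ hstep) hn)
  have hn_pos : 0 < n := pos_of_mul_pos_left ((pow_pos hβ0 m).trans_le hweight) (exp_pos _).le
  have hlog := log_le_log (pow_pos hβ0 m) hweight
  rw [log_pow, log_mul hn_pos.ne' (exp_pos _).ne', log_exp] at hlog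
  rw [one_div, log_inv]
  linarith

theorem crwm_mistake_bound_multiclass_general
    (β : ℝ) (hβ0 : 0 < β) (hβ1 : β < 1)
    (n L : ℕ)
    (t : Fin (L + 1) → ℕ)
    (F : (j : Fin (L + 1)) → Fin (t j) → ℝ)
    (hF : ∀ j i, 0 ≤ F j i ∧ F j i ≤ 1)
    (m : Fin (L + 1) → ℕ)
    (h : ∀ j, (n : ℝ) * ∏ i, (1 - (1 - β) * F j i) ≥ β ^ (m j)) :
    ∑ j, ∑ i, F j i ≤
      ((∑ j, (m j : ℝ)) * Real.log (1 / β) + (L + 1) * Real.log n) / (1 - β) := by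
  have hlearner (j : Fin (L + 1)) : (1 - β) * ∑ i, F j i ≤ m j * log (1 / β) + log n :=
    one_sub_mul_sum_le_of_pow_le_mul_prod _ hβ0 hβ1.le n.cast_nonneg (F j)
      (fun i _ => (hF j i).2) (h j)
  rw [le_div_iff₀ (sub_pos.2 hβ1), mul_comm, mul_sum]
  calc ∑ j, (1 - β) * ∑ i, F j i
      ≤ ∑ j : Fin (L + 1), (m j * log (1 / β) + log n) := sum_le_sum fun j _ => hlearner j
    _ = (∑ j, (m j : ℝ)) * log (1 / β) + (L + 1) * log n := by
      simp [sum_add_distrib, sum_mul]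

theorem crwm_mistake_bound_multiclass
    (β : ℝ) (hβ0 : 0 < β) (hβ1 : β < 1)
    (n L : ℕ) (hn : 1 ≤ n) (hL : 1 ≤ L)
    (t : Fin (L + 1) → ℕ)
    (F : (j : Fin (L + 1)) → Fin (t j) → ℝ)
    (hF : ∀ j i, 0 ≤ F j i ∧ F j i ≤ 1)
    (m : Fin (L + 1) → ℕ)
    (h : ∀ j, (n : ℝ) * ∏ i, (1 - (1 - β) * F j i) ≥ β ^ (m j)) :
    ∑ j, ∑ i, F j i ≤
      ((∑ j, (m j : ℝ)) * Real.log (1 / β) + (L + 1) * Real.log n) / (1 - β) :=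
  crwm_mistake_bound_multiclass_general β hβ0 hβ1 n L t F hF m h
end
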